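/- Let x : (t₁, t₂) → ℝ^d be a path with finite action whose collision set coll(x) = {t : x(t) = 0} has measure zero, such that x solves ẍ = ∇U(x) with the same constant energy h on every subinterval free of collisions. If t₀ ∈ coll(x) is not isolated in coll(x), then there exist intervals (aᵢ, bᵢ) with aᵢ, bᵢ → t₀, x(aᵢ) = x(bᵢ) = 0, x ≠ 0 on (aᵢ, bᵢ), and instants tᵢ ∈ (aᵢ, bᵢ) with İ(tᵢ) = 0 where I = |x|²; this contradicts Ï(t) = 4h + 2(2-α)U(x(t)) → +∞ as t → t₀ (since then İ would be strictly monotone near t₀). Hence collisions of a finite-action minimizer are isolated. -/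

import Mathlib

/-!
Since `U` blows up at the origin, near a collision the Lagrange–Jacobi identity
`Ï = 4h + (4 - 2α) U(x)` makes `Ï` positive wherever `x ≠ 0`, so `I = ‖x‖²` is strictly convex
on every collision-free interval there. A strictly convex function vanishing at both ends of an
interval is negative inside, which is absurd for `I ≥ 0`: so `x` vanishes between any two
collisions close to `t₀`, and the collision set, being null, contains no such pair.
-/

open Real Set Filter Topology MeasureTheory

section Homogeneous

variable {E : Type*} [NormedAddCommGroup E] [NormedSpace ℝ E] {U : E → ℝ} {α : ℝ}

theorem apply_smul_of_homogeneous (hU : ∀ y : E, y ≠ 0 → U y = ‖y‖ ^ (-α) * U (‖y‖⁻¹ • y))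
    {y : E} (hy : y ≠ 0) {l : ℝ} (hl : 0 < l) : U (l • y) = l ^ (-α) * U y := by
  have hny : 0 < ‖y‖ := norm_pos_iff.mpr hy
  have hnorm : ‖l • y‖ = l * ‖y‖ := by rw [norm_smul, Real.norm_of_nonneg hl.le]
  have hdir : ‖l • y‖⁻¹ • (l • y) = ‖y‖⁻¹ • y := by
    rw [hnorm, smul_smul]; congr 1; field_simp
  rw [hU (l • y) (smul_ne_zero hl.ne' hy), hdir, hnorm, Real.mul_rpow hl.le hny.le, mul_assoc,
    ← hU y hy]

theorem fderiv_apply_self_of_homogeneous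
    (hU : ∀ y : E, y ≠ 0 → U y = ‖y‖ ^ (-α) * U (‖y‖⁻¹ • y))
    {y : E} (hy : y ≠ 0) (hdU : DifferentiableAt ℝ U y) : fderiv ℝ U y y = -α * U y := by
  have hray : HasDerivAt (fun l : ℝ => U (l • y)) (fderiv ℝ U y y) 1 := by
    have hline : HasDerivAt (fun l : ℝ => l • y) y 1 := by
      simpa using (hasDerivAt_id (1 : ℝ)).smul_const y
    have hdU1 : HasFDerivAt U (fderiv ℝ U y) ((1 : ℝ) • y) := by
      rw [one_smul]; exact hdU.hasFDerivAt
    exact hdU1.comp_hasDerivAt (1 : ℝ) hline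
  have hscale : (fun l : ℝ => U (l • y)) =ᶠ[𝓝 1] fun l => l ^ (-α) * U y :=
    (eventually_gt_nhds one_pos).mono fun l hl => apply_smul_of_homogeneous hU hy hl
  have hpow : HasDerivAt (fun l : ℝ => l ^ (-α) * U y) (-α * 1 ^ (-α - 1) * U y) 1 :=
    (Real.hasDerivAt_rpow_const (Or.inl one_ne_zero)).mul_const (U y)
  simpa using (hray.congr_of_eventuallyEq hscale.symm).unique hpow

theorem tendsto_atTop_of_homogeneous [FiniteDimensional ℝ E]
    (hU : ∀ y : E, y ≠ 0 → U y = ‖y‖ ^ (-α) * U (‖y‖⁻¹ • y)) (hα : 0 < α)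
    (hcont : ContinuousOn U (Metric.sphere 0 1)) (hpos : ∀ y : E, ‖y‖ = 1 → 0 < U y) :
    Tendsto U (𝓝[≠] 0) atTop := by
  obtain ⟨m, hm, hmU⟩ := (isCompact_sphere (0 : E) 1).exists_forall_le' hcont
    fun y hy => hpos y (mem_sphere_zero_iff_norm.mp hy)
  refine tendsto_atTop_mono' _ ?_ (((tendsto_rpow_neg_nhdsGT_zero (neg_lt_zero.mpr hα)).comp
    tendsto_norm_nhdsNE_zero).const_mul_atTop hm)
  filter_upwards [self_mem_nhdsWithin] with y hy
  have hny : 0 < ‖y‖ := norm_pos_iff.mpr hy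
  have hdir : ‖y‖⁻¹ • y ∈ Metric.sphere (0 : E) 1 := by
    rw [mem_sphere_zero_iff_norm, norm_smul, norm_inv, norm_norm, inv_mul_cancel₀ hny.ne']
  rw [hU y hy, mul_comm]
  exact mul_le_mul_of_nonneg_left (hmU _ hdir) (Real.rpow_pos_of_pos hny _).le

end Homogeneous

theorem lagrange_jacobi {E : Type*} [NormedAddCommGroup E] [InnerProductSpace ℝ E]
    [CompleteSpace E] {U : E → ℝ} {α h : ℝ}
    (hU : ∀ y : E, y ≠ 0 → U y = ‖y‖ ^ (-α) * U (‖y‖⁻¹ • y))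
    {y v : E} (hy : y ≠ 0) (hdU : DifferentiableAt ℝ U y) (henergy : 1 / 2 * ‖v‖ ^ 2 - U y = h) :
    2 * ‖v‖ ^ 2 + 2 * inner ℝ (gradient U y) y = 4 * h + (4 - 2 * α) * U y := by
  rw [gradient, InnerProductSpace.toDual_symm_apply, fderiv_apply_self_of_homogeneous hU hy hdU]
  linear_combination 4 * henergy

theorem exists_Ioo_disjoint_of_isClosed {Z : Set ℝ} (hZ : IsClosed Z) {a b c : ℝ} (ha : a ∈ Z)
    (hb : b ∈ Z) (hc : c ∈ Ioo a b) (hcZ : c ∉ Z) :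
    ∃ a' ∈ Z, ∃ b' ∈ Z, c ∈ Ioo a' b' ∧ Disjoint (Ioo a' b') Z := by
  have hA : IsCompact (Z ∩ Icc a c) := isCompact_Icc.inter_left hZ
  have hB : IsCompact (Z ∩ Icc c b) := isCompact_Icc.inter_left hZ
  have ha' := hA.sSup_mem ⟨a, ha, le_rfl, hc.1.le⟩
  have hb' := hB.sInf_mem ⟨b, hb, hc.2.le, le_rfl⟩
  have ha'c : sSup (Z ∩ Icc a c) < c := ha'.2.2.lt_of_ne fun h => hcZ (h ▸ ha'.1)
  have hcb' : c < sInf (Z ∩ Icc c b) := hb'.2.1.lt_of_ne' fun h => hcZ (h ▸ hb'.1)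
  refine ⟨_, ha'.1, _, hb'.1, ⟨ha'c, hcb'⟩, disjoint_left.mpr fun t ht htZ => ?_⟩
  rcases le_total t c with htc | hct
  · exact ht.1.not_ge (le_csSup hA.bddAbove ⟨htZ, ha'.2.1.trans ht.1.le, htc⟩)
  · exact ht.2.not_ge (csInf_le hB.bddBelow ⟨htZ, hct, ht.2.le.trans hb'.2.2⟩)

section MomentOfInertia

variable {F : Type*} [NormedAddCommGroup F] [InnerProductSpace ℝ F] {x : ℝ → F}

theorem hasDerivAt_deriv_norm_sq {t : ℝ} (hx : ∀ᶠ s in 𝓝 t, DifferentiableAt ℝ x s)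
    (hx' : DifferentiableAt ℝ (deriv x) t) :
    HasDerivAt (deriv fun s => ‖x s‖ ^ 2)
      (2 * ‖deriv x t‖ ^ 2 + 2 * inner ℝ (deriv (deriv x) t) (x t)) t := by
  have hI' : deriv (fun s => ‖x s‖ ^ 2) =ᶠ[𝓝 t] fun s => 2 * inner ℝ (x s) (deriv x s) :=
    hx.mono fun s hs => hs.hasDerivAt.norm_sq.deriv
  refine (((hx.self_of_nhds.hasDerivAt.inner ℝ hx'.hasDerivAt).const_mul 2).congr_of_eventuallyEq
    hI').congr_deriv ?_
  rw [real_inner_self_eq_norm_sq, real_inner_comm]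
  ring

theorem strictConvexOn_norm_sq {a b : ℝ} (hcont : ContinuousOn x (Icc a b))
    (hdiff : ∀ t ∈ Ioo a b, DifferentiableAt ℝ x t ∧ DifferentiableAt ℝ (deriv x) t)
    (hpos : ∀ t ∈ Ioo a b, 0 < 2 * ‖deriv x t‖ ^ 2 + 2 * inner ℝ (deriv (deriv x) t) (x t)) :
    StrictConvexOn ℝ (Icc a b) fun t => ‖x t‖ ^ 2 := by
  refine strictConvexOn_of_deriv2_pos (convex_Icc a b) (hcont.norm.pow 2) fun t ht => ?_
  rw [interior_Icc] at ht
  have hx : ∀ᶠ s in 𝓝 t, DifferentiableAt ℝ x s :=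
    eventually_of_mem (isOpen_Ioo.mem_nhds ht) fun s hs => (hdiff s hs).1
  rw [Function.iterate_succ_apply, Function.iterate_one,
    (hasDerivAt_deriv_norm_sq hx (hdiff t ht).2).deriv]
  exact hpos t ht

theorem eqOn_zero_of_deriv2_norm_sq_pos {a b : ℝ} (hcont : ContinuousOn x (Icc a b))
    (ha : x a = 0) (hb : x b = 0)
    (hdiff : ∀ t ∈ Ioo a b, x t ≠ 0 → DifferentiableAt ℝ x t ∧ DifferentiableAt ℝ (deriv x) t)
    (hpos : ∀ t ∈ Ioo a b, x t ≠ 0 →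
      0 < 2 * ‖deriv x t‖ ^ 2 + 2 * inner ℝ (deriv (deriv x) t) (x t)) :
    EqOn x 0 (Ioo a b) := by
  intro c hc
  by_contra hxc
  have hab : a ≤ b := hc.1.le.trans hc.2.le
  obtain ⟨a', ha', b', hb', hc', hdisj⟩ := exists_Ioo_disjoint_of_isClosed
    (hcont.preimage_isClosed_of_isClosed isClosed_Icc isClosed_singleton)
    ⟨left_mem_Icc.mpr hab, ha⟩ ⟨right_mem_Icc.mpr hab, hb⟩ hc fun hcZ => hxc hcZ.2
  have hsub : Icc a' b' ⊆ Icc a b := Icc_subset_Icc ha'.1.1 hb'.1.2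
  have hfree : ∀ t ∈ Ioo a' b', x t ≠ 0 := fun t ht hxt =>
    disjoint_left.mp hdisj ht ⟨hsub (Ioo_subset_Icc_self ht), hxt⟩
  have hIoo : Ioo a' b' ⊆ Ioo a b := Ioo_subset_Ioo ha'.1.1 hb'.1.2
  have ha'b' : a' < b' := hc'.1.trans hc'.2
  have hconv := strictConvexOn_norm_sq (hcont.mono hsub)
    (fun t ht => hdiff t (hIoo ht) (hfree t ht)) (fun t ht => hpos t (hIoo ht) (hfree t ht))
  have := hconv.lt_on_openSegment (left_mem_Icc.mpr ha'b'.le) (right_mem_Icc.mpr ha'b'.le)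
    ha'b'.ne ((openSegment_eq_Ioo ha'b').symm ▸ hc')
  rw [show x a' = 0 from ha'.2, show x b' = 0 from hb'.2, norm_zero, max_self] at this
  linarith [sq_nonneg ‖x c‖]

end MomentOfInertia

theorem eqOn_zero_of_lagrange_jacobi_pos {E : Type*} [NormedAddCommGroup E]
    [InnerProductSpace ℝ E] [CompleteSpace E] {U : E → ℝ} {α h a b : ℝ} {x : ℝ → E}
    (hU : ∀ y : E, y ≠ 0 → U y = ‖y‖ ^ (-α) * U (‖y‖⁻¹ • y))
    (hdU : ∀ y : E, y ≠ 0 → DifferentiableAt ℝ U y) (hcont : ContinuousOn x (Icc a b))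
    (ha : x a = 0) (hb : x b = 0)
    (hdiff : ∀ t ∈ Ioo a b, x t ≠ 0 → DifferentiableAt ℝ x t ∧ DifferentiableAt ℝ (deriv x) t)
    (hsol : ∀ t ∈ Ioo a b, x t ≠ 0 →
      deriv (deriv x) t = gradient U (x t) ∧ 1 / 2 * ‖deriv x t‖ ^ 2 - U (x t) = h)
    (hpos : ∀ t ∈ Ioo a b, x t ≠ 0 → 0 < 4 * h + (4 - 2 * α) * U (x t)) :
    EqOn x 0 (Ioo a b) := by
  refine eqOn_zero_of_deriv2_norm_sq_pos hcont ha hb hdiff fun t ht hxt => ?_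
  obtain ⟨hacc, henergy⟩ := hsol t ht hxt
  rw [hacc, lagrange_jacobi hU hxt (hdU _ hxt) henergy]
  exact hpos t ht hxt

theorem collisions_isolated_general {d : ℕ} (α h t₁ t₂ : ℝ)
    (hα : α ∈ Set.Ioo (0:ℝ) 2)
    (U : EuclideanSpace ℝ (Fin d) → ℝ)
    (hUhom : ∀ y : EuclideanSpace ℝ (Fin d), y ≠ 0 →
      U y = ‖y‖ ^ (-α) * U (‖y‖⁻¹ • y))
    (hUC2 : ContDiffOn ℝ 2 U {y : EuclideanSpace ℝ (Fin d) | y ≠ 0})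
    (hUpos : ∀ y : EuclideanSpace ℝ (Fin d), ‖y‖ = 1 → 0 < U y)
    (x : ℝ → EuclideanSpace ℝ (Fin d))
    (hcont : ContinuousOn x (Set.Icc t₁ t₂))
    -- the collision set has measure zero:
    (hmeas : MeasureTheory.volume {t | t ∈ Set.Ioo t₁ t₂ ∧ x t = 0} = 0)
    (hdiff : ∀ t ∈ Set.Ioo t₁ t₂, x t ≠ 0 →
      DifferentiableAt ℝ x t ∧ DifferentiableAt ℝ (deriv x) t)
    -- the equation holds with the same constant energy `h` away from collisions:
    (hsol : ∀ t ∈ Set.Ioo t₁ t₂, x t ≠ 0 →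
      deriv (deriv x) t = gradient U (x t) ∧
      (1/2) * ‖deriv x t‖^2 - U (x t) = h) :
    ∀ t₀ ∈ Set.Ioo t₁ t₂, x t₀ = 0 →
      ∃ δ > (0:ℝ), ∀ t ∈ Set.Ioo (t₀ - δ) (t₀ + δ), t ≠ t₀ → x t ≠ 0 := by
  intro t₀ ht₀ hx₀
  have hdU : ∀ y ≠ 0, DifferentiableAt ℝ U y := fun y hy =>
    (hUC2.differentiableOn two_ne_zero).differentiableAt (isOpen_compl_singleton.mem_nhds hy)
  have hblowup : ∀ᶠ y in 𝓝[≠] 0, 0 < 4 * h + (4 - 2 * α) * U y :=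
    (tendsto_atTop_add_const_left _ _ ((tendsto_atTop_of_homogeneous hUhom hα.1
      (hUC2.continuousOn.mono fun y hy => ne_zero_of_mem_unit_sphere ⟨y, hy⟩) hUpos)
        |>.const_mul_atTop (by linarith [hα.2]))).eventually_gt_atTop 0
  have hxt₀ : Tendsto x (𝓝 t₀) (𝓝 0) := hx₀ ▸ hcont.continuousAt (Icc_mem_nhds ht₀.1 ht₀.2)
  obtain ⟨δ, hδ, hnear⟩ := Metric.eventually_nhds_iff_ball.mp <| (isOpen_Ioo.eventually_mem ht₀).and
    (hxt₀.eventually (eventually_nhdsWithin_iff.mp hblowup))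
  rw [Real.ball_eq_Ioo] at hnear
  have hpair : ∀ a b, a < b → a ∈ Ioo (t₀ - δ) (t₀ + δ) → b ∈ Ioo (t₀ - δ) (t₀ + δ) →
      x a = 0 → x b = 0 → False := by
    intro a b hab ha hb hxa hxb
    have hnear' t (ht : t ∈ Icc a b) := hnear t (ordConnected_Ioo.out ha hb ht)
    have hzero : EqOn x 0 (Ioo a b) := eqOn_zero_of_lagrange_jacobi_pos hUhom hdU
      (hcont.mono fun t ht => Ioo_subset_Icc_self (hnear' t ht).1) hxa hxb
      (fun t ht => hdiff t (hnear' t (Ioo_subset_Icc_self ht)).1)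
      (fun t ht => hsol t (hnear' t (Ioo_subset_Icc_self ht)).1)
      fun t ht => (hnear' t (Ioo_subset_Icc_self ht)).2
    have hcoll : Ioo a b ⊆ {t | t ∈ Ioo t₁ t₂ ∧ x t = 0} := fun t ht =>
      ⟨(hnear' t (Ioo_subset_Icc_self ht)).1, hzero ht⟩
    exact (isOpen_Ioo.measure_pos volume (nonempty_Ioo.mpr hab)).ne' (measure_mono_null hcoll hmeas)
  have ht₀δ : t₀ ∈ Ioo (t₀ - δ) (t₀ + δ) := Real.ball_eq_Ioo t₀ δ ▸ Metric.mem_ball_self hδ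
  refine ⟨δ, hδ, fun s hs hst₀ hxs => ?_⟩
  rcases hst₀.lt_or_gt with hlt | hgt
  · exact hpair s t₀ hlt hs ht₀δ hxs hx₀
  · exact hpair t₀ s hgt ht₀δ hs hx₀ hxs

/-- Collisions of a finite-action trajectory of the anisotropic Kepler problem
(which solves the equation with constant energy `h` away from collisions, the
collision set having measure zero) are isolated. -/
theorem collisions_isolated {d : ℕ} (hd : 2 ≤ d) (α h t₁ t₂ : ℝ)
    (hα : α ∈ Set.Ioo (0:ℝ) 2) (ht : t₁ < t₂)
    (U : EuclideanSpace ℝ (Fin d) → ℝ)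
    (hUhom : ∀ y : EuclideanSpace ℝ (Fin d), y ≠ 0 →
      U y = ‖y‖ ^ (-α) * U (‖y‖⁻¹ • y))
    (hUC2 : ContDiffOn ℝ 2 U {y : EuclideanSpace ℝ (Fin d) | y ≠ 0})
    (hUpos : ∀ y : EuclideanSpace ℝ (Fin d), ‖y‖ = 1 → 0 < U y)
    (x : ℝ → EuclideanSpace ℝ (Fin d))
    (hcont : ContinuousOn x (Set.Icc t₁ t₂))
    -- finite action:
    (hfin : IntervalIntegrable
      (fun t => (1/2) * ‖deriv x t‖^2 + U (x t)) MeasureTheory.volume t₁ t₂)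
    -- the collision set has measure zero:
    (hmeas : MeasureTheory.volume {t | t ∈ Set.Ioo t₁ t₂ ∧ x t = 0} = 0)
    (hdiff : ∀ t ∈ Set.Ioo t₁ t₂, x t ≠ 0 →
      DifferentiableAt ℝ x t ∧ DifferentiableAt ℝ (deriv x) t)
    -- the equation holds with the same constant energy `h` away from collisions:
    (hsol : ∀ t ∈ Set.Ioo t₁ t₂, x t ≠ 0 →
      deriv (deriv x) t = gradient U (x t) ∧
      (1/2) * ‖deriv x t‖^2 - U (x t) = h) :
    ∀ t₀ ∈ Set.Ioo t₁ t₂, x t₀ = 0 →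
      ∃ δ > (0:ℝ), ∀ t ∈ Set.Ioo (t₀ - δ) (t₀ + δ), t ≠ t₀ → x t ≠ 0 :=
  collisions_isolated_general α h t₁ t₂ hα U hUhom hUC2 hUpos x hcont hmeas hdiff hsol
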